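/- arXiv:2203.03135 — 3 statements merged into one kernel-verified Lean document; each statement's English description precedes it below -/
import Mathlib

section
/- There exists a universal constant A₁ > 0 (a Khintchine constant: for all N and real scalars (a_j)_{j=1}^N, E|Σ_{j=1}^N a_j r_j| ≥ A₁(Σ_{j=1}^N a_j²)^{1/2} for independent ±1 Rademacher variables (r_j)) such that the following holds. Let K > 0 and let (y_j)_{j=1}^∞ be a sequence of independent, mean-zero, variance-one, K-sub-Gaussian random variables. Set a = A₁K⁻²/16 and γ = a². Then Prob(|x| ≥ a‖x‖_{L²}) ≥ γ for every x ∈ span(y_j)_{j=1}^∞. Consequently, for every n ∈ ℕ the random vector v = (y₁,…,y_n) in ℓ₂ⁿ satisfies Prob(|⟨x,v⟩| ≥ a‖x‖_{ℓ₂ⁿ}) ≥ γ for all x ∈ ℓ₂ⁿ. -/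
open MeasureTheory ProbabilityTheory
open scoped ENNReal NNReal

noncomputable section

lemma young31 (s t : ℝ) : |s ^ 3 * t| ≤ 3 / 4 * s ^ 4 + 1 / 4 * t ^ 4 := by
  have h1 : |s ^ 3 * t| = |s| ^ 3 * |t| := by rw [abs_mul, abs_pow]
  have hx : (0:ℝ) ≤ |s| := abs_nonneg s
  have hy : (0:ℝ) ≤ |t| := abs_nonneg t
  have hs4 : |s| ^ 4 = s ^ 4 := (Even.pow_abs (by decide) s)
  have ht4 : |t| ^ 4 = t ^ 4 := (Even.pow_abs (by decide) t)
  have key : (0:ℝ) ≤ (|s| - |t|) ^ 2 * (3 * |s| ^ 2 + 2 * |s| * |t| + |t| ^ 2) := by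
    apply mul_nonneg (sq_nonneg _)
    nlinarith [sq_nonneg (|s| + |t|), mul_nonneg hx hy, sq_nonneg |s|, sq_nonneg |t|]
  nlinarith [key]

lemma young22 (s t : ℝ) : |s ^ 2 * t ^ 2| ≤ 1 / 2 * s ^ 4 + 1 / 2 * t ^ 4 := by
  have : |s ^ 2 * t ^ 2| = s ^ 2 * t ^ 2 := abs_of_nonneg (by positivity)
  nlinarith [sq_nonneg (s ^ 2 - t ^ 2)]

variable {Ω : Type} [MeasurableSpace Ω] {μ : Measure Ω} [IsProbabilityMeasure μ]

lemma moments (y : ℕ → Ω → ℝ) (hmeas : ∀ j, Measurable (y j))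
    (hind : iIndepFun y μ)
    (hmean : ∀ j, ∫ ω, y j ω ∂μ = 0) (hvar : ∀ j, ∫ ω, (y j ω) ^ 2 ∂μ = 1)
    (B : ℝ) (hB : 1 ≤ B) (h4 : ∀ j, ∫ ω, (y j ω) ^ 4 ∂μ ≤ B)
    (hmem : ∀ j, MemLp (y j) 4 μ) (c : ℕ → ℝ) (s : Finset ℕ) :
    MemLp (fun ω => ∑ j ∈ s, c j * y j ω) 4 μ ∧
    (∫ ω, ∑ j ∈ s, c j * y j ω ∂μ) = 0 ∧
    (∫ ω, (∑ j ∈ s, c j * y j ω) ^ 2 ∂μ) = ∑ j ∈ s, c j ^ 2 ∧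
    (∫ ω, (∑ j ∈ s, c j * y j ω) ^ 4 ∂μ) ≤ 3 * B * (∑ j ∈ s, c j ^ 2) ^ 2 := by
  classical
  induction s using Finset.induction_on with
  | empty =>
      refine ⟨by simpa using memLp_const (0:ℝ), by simp, by simp, by simp⟩
  | @insert i s hi IH =>
      obtain ⟨IHmem, IHmean, IHvar, IH4⟩ := IH
      set S : Ω → ℝ := fun ω => ∑ j ∈ s, c j * y j ω with hS
      set z : Ω → ℝ := fun ω => c i * y i ω with hz
      have hSmeas : Measurable S := by
        apply Finset.measurable_sum
        exact fun j _ => (hmeas j).const_mul (c j)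
      have hzmeas : Measurable z := (hmeas i).const_mul (c i)
      have hmemz : MemLp z 4 μ := (hmem i).const_mul (c i)
      -- independence of S and z
      have hz_ind : iIndepFun (fun j ω => c j * y j ω) μ := by
        have := hind.comp (fun j t => c j * t) (fun j => measurable_const_mul (c j))
        exact this
      have hSz : IndepFun S z μ := by
        have h := hz_ind.indepFun_finsetSum_of_notMem
          (fun j => (hmeas j).const_mul (c j)) hi
        have hsum : (∑ j ∈ s, fun ω => c j * y j ω) = S := by
          funext ω; simp [hS]
        rwa [hsum] at h
      -- basic integrabilities
      have hmemS2 : MemLp S 2 μ := IHmem.mono_exponent (by norm_num)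
      have hmemz2 : MemLp z 2 μ := hmemz.mono_exponent (by norm_num)
      have IntS : Integrable S μ := IHmem.integrable (by norm_num)
      have Intz : Integrable z μ := hmemz.integrable (by norm_num)
      have IntS2 : Integrable (fun ω => S ω ^ 2) μ := hmemS2.integrable_sq
      have Intz2 : Integrable (fun ω => z ω ^ 2) μ := hmemz2.integrable_sq
      have pow4int : ∀ (g : Ω → ℝ), MemLp g 4 μ → Integrable (fun ω => g ω ^ 4) μ := by
        intro g hg
        have h := hg.integrable_norm_rpow (by norm_num) (by norm_num)
        refine h.congr (Filter.Eventually.of_forall fun ω => ?_)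
        show ‖g ω‖ ^ ((4:ℝ≥0∞).toReal) = g ω ^ 4
        rw [Real.norm_eq_abs, (by norm_num : ((4:ℝ≥0∞).toReal) = (4:ℝ)),
          (by norm_num : (4:ℝ) = ((4:ℕ):ℝ)), Real.rpow_natCast]
        exact Even.pow_abs (by decide) _
      have IntS4 : Integrable (fun ω => S ω ^ 4) μ := pow4int S IHmem
      have Intz4 : Integrable (fun ω => z ω ^ 4) μ := pow4int z hmemz
      have IntSz : Integrable (fun ω => S ω * z ω) μ := by
        have := hSz.integrable_mul IntS Intz
        exact this
      have IntS3z : Integrable (fun ω => S ω ^ 3 * z ω) μ := by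
        refine Integrable.mono' ((IntS4.const_mul (3/4)).add (Intz4.const_mul (1/4)))
          (((hSmeas.pow_const 3).mul hzmeas).aestronglyMeasurable)
          (Filter.Eventually.of_forall fun ω => ?_)
        rw [Real.norm_eq_abs]
        exact young31 (S ω) (z ω)
      have IntSz3 : Integrable (fun ω => z ω ^ 3 * S ω) μ := by
        refine Integrable.mono' ((Intz4.const_mul (3/4)).add (IntS4.const_mul (1/4)))
          (((hzmeas.pow_const 3).mul hSmeas).aestronglyMeasurable)
          (Filter.Eventually.of_forall fun ω => ?_)
        rw [Real.norm_eq_abs]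
        exact young31 (z ω) (S ω)
      have IntS2z2 : Integrable (fun ω => S ω ^ 2 * z ω ^ 2) μ := by
        refine Integrable.mono' ((IntS4.const_mul (1/2)).add (Intz4.const_mul (1/2)))
          (((hSmeas.pow_const 2).mul (hzmeas.pow_const 2)).aestronglyMeasurable)
          (Filter.Eventually.of_forall fun ω => ?_)
        rw [Real.norm_eq_abs]
        exact young22 (S ω) (z ω)
      -- moment factorizations
      have hkl : ∀ k l : ℕ, (∫ ω, S ω ^ k * z ω ^ l ∂μ)
          = (∫ ω, S ω ^ k ∂μ) * (∫ ω, z ω ^ l ∂μ) := by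
        intro k l
        have h := (hSz.comp (measurable_id.pow_const k) (measurable_id.pow_const l)).integral_fun_mul_eq_mul_integral
          ((hSmeas.pow_const k).aestronglyMeasurable) ((hzmeas.pow_const l).aestronglyMeasurable)
        exact h
      -- moments of z
      have hzmean : (∫ ω, z ω ∂μ) = 0 := by
        simp only [hz, integral_const_mul, hmean i, mul_zero]
      have hzvar : (∫ ω, z ω ^ 2 ∂μ) = c i ^ 2 := by
        simp only [hz, mul_pow, integral_const_mul, hvar i, mul_one]
      have hz4 : (∫ ω, z ω ^ 4 ∂μ) ≤ c i ^ 4 * B := by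
        simp only [hz, mul_pow, integral_const_mul]
        exact mul_le_mul_of_nonneg_left (h4 i) (by positivity)
      have hz4nonneg : (0:ℝ) ≤ ∫ ω, z ω ^ 4 ∂μ :=
        integral_nonneg fun ω => by positivity
      -- goal rewriting
      have hnew : ∀ ω, (∑ j ∈ insert i s, c j * y j ω) = z ω + S ω := by
        intro ω; rw [Finset.sum_insert hi]
      have hfun : (fun ω => ∑ j ∈ insert i s, c j * y j ω) = fun ω => z ω + S ω :=
        funext hnew
      have hσnonneg : (0:ℝ) ≤ ∑ j ∈ s, c j ^ 2 :=
        Finset.sum_nonneg fun j _ => by positivity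
      refine ⟨?_, ?_, ?_, ?_⟩
      · rw [hfun]; exact hmemz.add IHmem
      · rw [hfun, integral_add Intz IntS, hzmean, IHmean, add_zero]
      · have hexp : (fun ω => (∑ j ∈ insert i s, c j * y j ω) ^ 2)
            = fun ω => z ω ^ 2 + (2 * (S ω * z ω) + S ω ^ 2) := by
          funext ω; rw [hnew ω]; ring
        have Ia : Integrable (fun ω => 2 * (S ω * z ω)) μ := by
          exact IntSz.const_mul 2
        have Ib : Integrable (fun ω => 2 * (S ω * z ω) + S ω ^ 2) μ := by
          exact Ia.add IntS2
        rw [hexp, integral_add Intz2 Ib, integral_add Ia IntS2, integral_const_mul]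
        have h11 : (∫ ω, S ω * z ω ∂μ) = 0 := by
          have := hkl 1 1
          simp only [pow_one] at this
          rw [this, hzmean, mul_zero]
        rw [h11, hzvar, IHvar, Finset.sum_insert hi]
        ring
      · have hexp : (fun ω => (∑ j ∈ insert i s, c j * y j ω) ^ 4)
            = fun ω => z ω ^ 4 + (4 * (z ω ^ 3 * S ω) + (6 * (S ω ^ 2 * z ω ^ 2)
              + (4 * (S ω ^ 3 * z ω) + S ω ^ 4))) := by
          funext ω; rw [hnew ω]; ring
        have Ja : Integrable (fun ω => 4 * (z ω ^ 3 * S ω)) μ := by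
          exact IntSz3.const_mul 4
        have Jb : Integrable (fun ω => 6 * (S ω ^ 2 * z ω ^ 2)) μ := by
          exact IntS2z2.const_mul 6
        have Jc : Integrable (fun ω => 4 * (S ω ^ 3 * z ω)) μ := by
          exact IntS3z.const_mul 4
        have Jd : Integrable (fun ω => 4 * (S ω ^ 3 * z ω) + S ω ^ 4) μ := by
          exact Jc.add IntS4
        have Je : Integrable (fun ω => 6 * (S ω ^ 2 * z ω ^ 2) + (4 * (S ω ^ 3 * z ω) + S ω ^ 4)) μ := by
          exact Jb.add Jd
        have Jf : Integrable (fun ω => 4 * (z ω ^ 3 * S ω) + (6 * (S ω ^ 2 * z ω ^ 2) + (4 * (S ω ^ 3 * z ω) + S ω ^ 4))) μ := by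
          exact Ja.add Je
        rw [hexp, integral_add Intz4 Jf, integral_add Ja Je, integral_add Jb Jd,
          integral_add Jc IntS4, integral_const_mul, integral_const_mul, integral_const_mul]
        have h31 : (∫ ω, S ω ^ 3 * z ω ∂μ) = 0 := by
          have := hkl 3 1
          simp only [pow_one] at this
          rw [this, hzmean, mul_zero]
        have h13 : (∫ ω, z ω ^ 3 * S ω ∂μ) = 0 := by
          have h : (∫ ω, z ω ^ 3 * S ω ∂μ) = ∫ ω, S ω * z ω ^ 3 ∂μ := by
            congr 1; funext ω; ring
          have h' := hkl 1 3
          simp only [pow_one] at h'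
          rw [h, h', IHmean, zero_mul]
        have h22 : (∫ ω, S ω ^ 2 * z ω ^ 2 ∂μ) = (∑ j ∈ s, c j ^ 2) * c i ^ 2 := by
          rw [hkl 2 2, IHvar, hzvar]
        rw [h31, h13, h22, Finset.sum_insert hi]
        simp only [mul_zero, zero_add, add_zero]
        nlinarith [IH4, hz4, hσnonneg, sq_nonneg (c i), sq_nonneg (∑ j ∈ s, c j ^ 2),
          sq_nonneg (c i ^ 2 - ∑ j ∈ s, c j ^ 2), mul_nonneg hσnonneg (sq_nonneg (c i))]

lemma PZ (g : Ω → ℝ) (hg : Measurable g) (hmem : MemLp g 4 μ) (t M a : ℝ)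
    (ht : ∫ ω, g ω ^ 2 ∂μ = t) (hM : ∫ ω, g ω ^ 4 ∂μ ≤ M) (ha0 : 0 ≤ a) (ha1 : a ≤ 1) :
    ENNReal.ofReal ((1 - a ^ 2) ^ 2 * t ^ 2 / M) ≤ μ {ω | a * Real.sqrt t ≤ |g ω|} := by
  have htnn : 0 ≤ t := ht ▸ integral_nonneg fun ω => by positivity
  have Int4 : Integrable (fun ω => g ω ^ 4) μ := by
    have h := hmem.integrable_norm_rpow (by norm_num) (by norm_num)
    refine h.congr (Filter.Eventually.of_forall fun ω => ?_)
    show ‖g ω‖ ^ ((4:ℝ≥0∞).toReal) = g ω ^ 4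
    rw [Real.norm_eq_abs, (by norm_num : ((4:ℝ≥0∞).toReal) = (4:ℝ)),
      (by norm_num : (4:ℝ) = ((4:ℕ):ℝ)), Real.rpow_natCast]
    exact Even.pow_abs (by decide) _
  have hM0 : 0 ≤ M := le_trans (integral_nonneg fun ω => by positivity) hM
  rcases eq_or_lt_of_le hM0 with hMeq | hMpos
  · rw [← hMeq, div_zero]; simp
  set A : Set Ω := {ω | a * Real.sqrt t ≤ |g ω|} with hAdef
  have hA : MeasurableSet A := by
    have : A = (fun ω => |g ω|) ⁻¹' Set.Ici (a * Real.sqrt t) := rfl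
    rw [this]; exact hg.abs measurableSet_Ici
  have Int2 : Integrable (fun ω => g ω ^ 2) μ :=
    (hmem.mono_exponent (by norm_num)).integrable_sq
  -- split t
  have hsplit : (∫ ω in A, g ω ^ 2 ∂μ) + (∫ ω in Aᶜ, g ω ^ 2 ∂μ) = t := by
    rw [integral_add_compl hA Int2, ht]
  -- complement bound
  have hcompl : (∫ ω in Aᶜ, g ω ^ 2 ∂μ) ≤ a ^ 2 * t := by
    have hle : ∀ ω ∈ Aᶜ, g ω ^ 2 ≤ a ^ 2 * t := by
      intro ω hω
      have h1 : |g ω| < a * Real.sqrt t := lt_of_not_ge hω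
      have h2 : |g ω| ^ 2 ≤ (a * Real.sqrt t) ^ 2 := by
        apply sq_le_sq' <;> nlinarith [abs_nonneg (g ω), Real.sqrt_nonneg t,
          mul_nonneg ha0 (Real.sqrt_nonneg t)]
      calc g ω ^ 2 = |g ω| ^ 2 := (sq_abs _).symm
        _ ≤ (a * Real.sqrt t) ^ 2 := h2
        _ = a ^ 2 * t := by rw [mul_pow, Real.sq_sqrt htnn]
    calc (∫ ω in Aᶜ, g ω ^ 2 ∂μ) ≤ ∫ _ω in Aᶜ, a ^ 2 * t ∂μ := by
          apply setIntegral_mono_on Int2.integrableOn (integrableOn_const ?_) hA.compl hle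
          exact measure_ne_top μ _
      _ = (μ Aᶜ).toReal • (a ^ 2 * t) := setIntegral_const _
      _ ≤ a ^ 2 * t := by
          rw [smul_eq_mul]
          have h1 : (μ Aᶜ).toReal ≤ 1 := by
            have := prob_le_one (μ := μ) (s := Aᶜ)
            simpa using ENNReal.toReal_mono (by norm_num) this
          nlinarith [sq_nonneg a, htnn, mul_nonneg (sq_nonneg a) htnn,
            ENNReal.toReal_nonneg (a := μ Aᶜ)]
  -- Cauchy–Schwarz on A
  have hmemg2 : MemLp (fun ω => g ω ^ 2) (ENNReal.ofReal 2) μ := by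
    rw [(by norm_num : ENNReal.ofReal 2 = (2:ℝ≥0∞))]
    rw [memLp_two_iff_integrable_sq ((hg.pow_const 2).aestronglyMeasurable)]
    exact Int4.congr (Filter.Eventually.of_forall fun ω => by ring)
  have hCS : (∫ ω in A, g ω ^ 2 ∂μ) ≤
      Real.sqrt M * Real.sqrt ((μ A).toReal) := by
    have hone : MemLp (fun _ : Ω => (1:ℝ)) (ENNReal.ofReal 2) (μ.restrict A) := memLp_const 1
    have h := integral_mul_le_Lp_mul_Lq_of_nonneg (⟨by norm_num, by norm_num, by norm_num⟩ : Real.HolderConjugate 2 2)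
      (μ := μ.restrict A) (f := fun ω => g ω ^ 2) (g := fun _ => (1:ℝ))
      (Filter.Eventually.of_forall fun ω => by positivity)
      (Filter.Eventually.of_forall fun ω => zero_le_one)
      (hmemg2.restrict A) hone
    simp only [mul_one, Real.one_rpow] at h
    have e1 : (∫ ω in A, (g ω ^ 2) ^ (2:ℝ) ∂μ) = ∫ ω in A, g ω ^ 4 ∂μ := by
      apply integral_congr_ae
      refine Filter.Eventually.of_forall fun ω => ?_
      show (g ω ^ 2) ^ (2:ℝ) = g ω ^ 4
      rw [Real.rpow_two]; ring
    have e2 : (∫ _ω in A, (1:ℝ) ∂μ) = (μ A).toReal := by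
      rw [setIntegral_const, smul_eq_mul, mul_one, measureReal_def]
    rw [e1, e2] at h
    have h4A : (∫ ω in A, g ω ^ 4 ∂μ) ≤ M :=
      le_trans (setIntegral_le_integral Int4
        (Filter.Eventually.of_forall fun ω => by positivity)) hM
    have h4Ann : 0 ≤ ∫ ω in A, g ω ^ 4 ∂μ :=
      integral_nonneg fun ω => by positivity
    calc (∫ ω in A, g ω ^ 2 ∂μ) ≤ (∫ ω in A, g ω ^ 4 ∂μ) ^ (1/(2:ℝ)) * ((μ A).toReal) ^ (1/(2:ℝ)) := h
      _ ≤ Real.sqrt M * Real.sqrt ((μ A).toReal) := by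
          rw [← Real.sqrt_eq_rpow, ← Real.sqrt_eq_rpow]
          exact mul_le_mul_of_nonneg_right (Real.sqrt_le_sqrt h4A) (Real.sqrt_nonneg _)
  -- combine
  have hkey : (1 - a ^ 2) * t ≤ Real.sqrt M * Real.sqrt ((μ A).toReal) := by
    nlinarith [hsplit, hcompl, hCS]
  have hP : 0 ≤ (μ A).toReal := ENNReal.toReal_nonneg
  have hsq : (1 - a ^ 2) ^ 2 * t ^ 2 ≤ M * (μ A).toReal := by
    have lnn : 0 ≤ (1 - a ^ 2) * t := mul_nonneg (by nlinarith) htnn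
    have := mul_self_le_mul_self lnn hkey
    have hms : (Real.sqrt M * Real.sqrt ((μ A).toReal)) * (Real.sqrt M * Real.sqrt ((μ A).toReal))
        = M * (μ A).toReal := by
      rw [show (Real.sqrt M * Real.sqrt ((μ A).toReal)) * (Real.sqrt M * Real.sqrt ((μ A).toReal))
        = (Real.sqrt M * Real.sqrt M) * (Real.sqrt ((μ A).toReal) * Real.sqrt ((μ A).toReal)) by ring,
        Real.mul_self_sqrt hM0, Real.mul_self_sqrt hP]
    nlinarith [this, hms]
  have hdiv : (1 - a ^ 2) ^ 2 * t ^ 2 / M ≤ (μ A).toReal := by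
    rw [div_le_iff₀ hMpos]; nlinarith [hsq]
  calc ENNReal.ofReal ((1 - a ^ 2) ^ 2 * t ^ 2 / M) ≤ ENNReal.ofReal ((μ A).toReal) :=
        ENNReal.ofReal_le_ofReal hdiv
    _ = μ A := ENNReal.ofReal_toReal (measure_ne_top μ A)

lemma L1_lower (g : Ω → ℝ) (hg : Measurable g) (hmem : MemLp g 4 μ) (t : ℝ)
    (ht : ∫ ω, g ω ^ 2 ∂μ = t) (h4 : ∫ ω, g ω ^ 4 ∂μ ≤ 3 * t ^ 2) :
    1 / 2 * Real.sqrt t ≤ ∫ ω, |g ω| ∂μ := by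
  have htnn : 0 ≤ t := ht ▸ integral_nonneg fun ω => by positivity
  have hXnn : 0 ≤ ∫ ω, |g ω| ∂μ := integral_nonneg fun ω => abs_nonneg _
  rcases eq_or_lt_of_le htnn with h0 | htpos
  · rw [← h0, Real.sqrt_zero, mul_zero]; exact hXnn
  -- Hölder with p = 3/2, q = 3
  have hpq : Real.HolderConjugate (3/2) 3 := ⟨by norm_num, by norm_num, by norm_num⟩
  have hmem1 : MemLp g 1 μ := hmem.mono_exponent (by norm_num)
  have hmf : MemLp (fun ω => |g ω| ^ ((2:ℝ)/3)) (ENNReal.ofReal (3/2)) μ := by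
    constructor
    · exact ((hg.abs).pow_const _).aestronglyMeasurable
    · have he : eLpNorm (fun ω => |g ω| ^ ((2:ℝ)/3)) (ENNReal.ofReal (3/2)) μ
          = eLpNorm g (ENNReal.ofReal (3/2) * ENNReal.ofReal ((2:ℝ)/3)) μ ^ ((2:ℝ)/3) := by
        have := eLpNorm_norm_rpow g (μ := μ) (p := ENNReal.ofReal (3/2)) (q := (2:ℝ)/3)
          (by norm_num)
        simpa [Real.norm_eq_abs] using this
      rw [he, (by rw [← ENNReal.ofReal_mul (by norm_num)]; norm_num :
        ENNReal.ofReal (3/2) * ENNReal.ofReal ((2:ℝ)/3) = (1:ℝ≥0∞))]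
      exact ENNReal.rpow_lt_top_of_nonneg (by norm_num) hmem1.eLpNorm_ne_top
  have hmh : MemLp (fun ω => |g ω| ^ ((4:ℝ)/3)) (ENNReal.ofReal 3) μ := by
    constructor
    · exact ((hg.abs).pow_const _).aestronglyMeasurable
    · have he : eLpNorm (fun ω => |g ω| ^ ((4:ℝ)/3)) (ENNReal.ofReal 3) μ
          = eLpNorm g (ENNReal.ofReal 3 * ENNReal.ofReal ((4:ℝ)/3)) μ ^ ((4:ℝ)/3) := by
        have := eLpNorm_norm_rpow g (μ := μ) (p := ENNReal.ofReal 3) (q := (4:ℝ)/3)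
          (by norm_num)
        simpa [Real.norm_eq_abs] using this
      rw [he, (by rw [← ENNReal.ofReal_mul (by norm_num)]; norm_num :
        ENNReal.ofReal 3 * ENNReal.ofReal ((4:ℝ)/3) = (4:ℝ≥0∞))]
      exact ENNReal.rpow_lt_top_of_nonneg (by norm_num) hmem.eLpNorm_ne_top
  have hH := integral_mul_le_Lp_mul_Lq_of_nonneg hpq
    (Filter.Eventually.of_forall fun ω => Real.rpow_nonneg (abs_nonneg _) _)
    (Filter.Eventually.of_forall fun ω => Real.rpow_nonneg (abs_nonneg _) _)
    hmf hmh
  have e0 : (∫ ω, |g ω| ^ ((2:ℝ)/3) * |g ω| ^ ((4:ℝ)/3) ∂μ) = t := by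
    rw [← ht]
    apply integral_congr_ae
    refine Filter.Eventually.of_forall fun ω => ?_
    show |g ω| ^ ((2:ℝ)/3) * |g ω| ^ ((4:ℝ)/3) = g ω ^ 2
    rw [← Real.rpow_add' (abs_nonneg _) (by norm_num)]
    rw [(by norm_num : (2:ℝ)/3 + (4:ℝ)/3 = (2:ℝ)), Real.rpow_two, sq_abs]
  have e1 : (∫ ω, (|g ω| ^ ((2:ℝ)/3)) ^ ((3:ℝ)/2) ∂μ) = ∫ ω, |g ω| ∂μ := by
    apply integral_congr_ae
    refine Filter.Eventually.of_forall fun ω => ?_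
    show (|g ω| ^ ((2:ℝ)/3)) ^ ((3:ℝ)/2) = |g ω|
    rw [← Real.rpow_mul (abs_nonneg _)]
    norm_num
  have e2 : (∫ ω, (|g ω| ^ ((4:ℝ)/3)) ^ (3:ℝ) ∂μ) = ∫ ω, g ω ^ 4 ∂μ := by
    apply integral_congr_ae
    refine Filter.Eventually.of_forall fun ω => ?_
    show (|g ω| ^ ((4:ℝ)/3)) ^ (3:ℝ) = g ω ^ 4
    rw [← Real.rpow_mul (abs_nonneg _)]
    rw [(by norm_num : (4:ℝ)/3 * 3 = ((4:ℕ):ℝ)), Real.rpow_natCast]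
    exact (Even.pow_abs (by decide) _)
  rw [e0, e1, e2] at hH
  set X := ∫ ω, |g ω| ∂μ with hXdef
  set W := ∫ ω, g ω ^ 4 ∂μ with hWdef
  have hWnn : 0 ≤ W := integral_nonneg fun ω => by positivity
  have h1 : t ≤ X ^ ((2:ℝ)/3) * W ^ ((1:ℝ)/3) := by
    convert hH using 3 <;> norm_num
  have h2 : X ^ ((2:ℝ)/3) * W ^ ((1:ℝ)/3) ≤ X ^ ((2:ℝ)/3) * (3 * t ^ 2) ^ ((1:ℝ)/3) :=
    mul_le_mul_of_nonneg_left (Real.rpow_le_rpow hWnn h4 (by norm_num))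
      (Real.rpow_nonneg hXnn _)
  have h3 : t ≤ X ^ ((2:ℝ)/3) * (3 * t ^ 2) ^ ((1:ℝ)/3) := le_trans h1 h2
  have h5 := pow_le_pow_left₀ htnn h3 3
  have eA : (X ^ ((2:ℝ)/3)) ^ (3:ℕ) = X ^ 2 := by
    rw [← Real.rpow_natCast (X ^ ((2:ℝ)/3)) 3, ← Real.rpow_mul hXnn,
      (by norm_num : (2:ℝ)/3 * ((3:ℕ):ℝ) = ((2:ℕ):ℝ)), Real.rpow_natCast]
  have eB : ((3 * t ^ 2) ^ ((1:ℝ)/3)) ^ (3:ℕ) = 3 * t ^ 2 := by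
    rw [← Real.rpow_natCast ((3 * t ^ 2) ^ ((1:ℝ)/3)) 3, ← Real.rpow_mul (by positivity),
      (by norm_num : (1:ℝ)/3 * ((3:ℕ):ℝ) = ((1:ℕ):ℝ)), Real.rpow_natCast, pow_one]
  have hcube : t ^ 3 ≤ X ^ 2 * (3 * t ^ 2) := by
    calc t ^ 3 ≤ (X ^ ((2:ℝ)/3) * (3 * t ^ 2) ^ ((1:ℝ)/3)) ^ 3 := h5
      _ = X ^ 2 * (3 * t ^ 2) := by rw [mul_pow, eA, eB]
  have ht2 : t ≤ 3 * X ^ 2 := by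
    have hpos : (0:ℝ) < t ^ 2 := by positivity
    refine le_of_mul_le_mul_right ?_ hpos
    nlinarith [hcube]
  have hs := Real.sqrt_le_sqrt (show t ≤ (2 * X) ^ 2 by nlinarith [ht2, sq_nonneg X])
  rw [Real.sqrt_sq (by positivity)] at hs
  linarith

/-- Lemma 4.4: there is a universal Khintchine constant `A₁ > 0` such that for any independent
sequence `(yⱼ)` of mean-zero, variance-one, `K`-sub-Gaussian random variables, setting
`a = A₁K⁻²/16` and `γ = a²`, we have `Prob(|x| ≥ a‖x‖_{L²}) ≥ γ` for every `x ∈ span(yⱼ)`; in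
particular for every `n`, the random vector `v = (y₁,…,y_n)` satisfies
`Prob(|⟨x,v⟩| ≥ a‖x‖) ≥ γ` for all `x ∈ ℓ₂ⁿ`. -/
theorem subgaussian_prob_lower_bound :
    ∃ A₁ > (0 : ℝ),
      -- `A₁` is a Khintchine constant:
      (∀ (Ω : Type) (_ : MeasurableSpace Ω) (μ : Measure Ω), IsProbabilityMeasure μ →
        ∀ r : ℕ → Ω → ℝ, (∀ j, Measurable (r j)) →
          iIndepFun r μ →
          (∀ j, ∫ ω, r j ω ∂μ = 0) →
          (∀ j, ∀ᵐ ω ∂μ, |r j ω| = 1) →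
          ∀ (N : ℕ) (c : ℕ → ℝ),
            A₁ * Real.sqrt (∑ j ∈ Finset.range N, (c j) ^ 2) ≤
              ∫ ω, |∑ j ∈ Finset.range N, c j * r j ω| ∂μ) ∧
      -- the conclusion of the lemma:
      (∀ (Ω : Type) (_ : MeasurableSpace Ω) (μ : Measure Ω), IsProbabilityMeasure μ →
        ∀ K : ℝ, 0 < K →
        ∀ y : ℕ → Ω → ℝ, (∀ j, Measurable (y j)) →
          iIndepFun y μ →
          (∀ j, ∫ ω, y j ω ∂μ = 0) →
          (∀ j, ∫ ω, (y j ω) ^ 2 ∂μ = 1) →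
          (∀ j, ∀ p : ℝ, 1 ≤ p →
            eLpNorm (y j) (ENNReal.ofReal p) μ ≤ ENNReal.ofReal (K * Real.sqrt p)) →
          -- `Prob(|x| ≥ a‖x‖_{L²}) ≥ γ` for every `x` in the span of `(yⱼ)`:
          (∀ (s : Finset ℕ) (c : ℕ → ℝ),
            ENNReal.ofReal ((A₁ * K⁻¹ ^ 2 / 16) ^ 2) ≤
              μ {ω | (A₁ * K⁻¹ ^ 2 / 16) *
                  Real.sqrt (∫ ω', (∑ j ∈ s, c j * y j ω') ^ 2 ∂μ) ≤ |∑ j ∈ s, c j * y j ω|}) ∧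
          -- consequently, for every `n`, `Prob(|⟨x,v⟩| ≥ a‖x‖) ≥ γ` for all `x ∈ ℓ₂ⁿ`:
          (∀ (n : ℕ) (x : EuclideanSpace ℝ (Fin n)),
            ENNReal.ofReal ((A₁ * K⁻¹ ^ 2 / 16) ^ 2) ≤
              μ {ω | (A₁ * K⁻¹ ^ 2 / 16) * ‖x‖ ≤ |∑ i, x i * y i ω|})) := by
  refine ⟨1/2, by norm_num, ?_, ?_⟩
  · -- Khintchine part
    intro Ω mΩ μ hprob r hmeas hind hmean habs N c
    haveI := hprob
    have hvar : ∀ j, ∫ ω, (r j ω) ^ 2 ∂μ = 1 := by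
      intro j
      have h : (fun ω => (r j ω) ^ 2) =ᵐ[μ] fun _ => (1:ℝ) := by
        filter_upwards [habs j] with ω hω
        rw [← sq_abs, hω]; norm_num
      rw [integral_congr_ae h]; simp
    have h4 : ∀ j, ∫ ω, (r j ω) ^ 4 ∂μ ≤ 1 := by
      intro j
      have h : (fun ω => (r j ω) ^ 4) =ᵐ[μ] fun _ => (1:ℝ) := by
        filter_upwards [habs j] with ω hω
        rw [← Even.pow_abs (by decide : Even 4), hω]; norm_num
      rw [integral_congr_ae h]; simp
    have hmem : ∀ j, MemLp (r j) 4 μ := by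
      intro j
      refine (memLp_top_of_bound (hmeas j).aestronglyMeasurable 1 ?_).mono_exponent le_top
      filter_upwards [habs j] with ω hω
      rw [Real.norm_eq_abs, hω]
    obtain ⟨hm, _, hvar', h4'⟩ := moments r hmeas hind hmean hvar 1 le_rfl h4 hmem c
      (Finset.range N)
    exact L1_lower _ (Finset.measurable_sum _ fun j _ => (hmeas j).const_mul _) hm _
      hvar' (by linarith [h4'])
  · -- sub-Gaussian part
    intro Ω mΩ μ hprob K hK y hmeas hind hmean hvar hsub
    haveI := hprob
    have h2eq : (ENNReal.ofReal (2:ℝ)) = (2:ℝ≥0∞) := by norm_num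
    have h4eq : (ENNReal.ofReal (4:ℝ)) = (4:ℝ≥0∞) := by norm_num
    have hmem4 : ∀ j, MemLp (y j) 4 μ := by
      intro j
      have h := hsub j 4 (by norm_num)
      rw [h4eq] at h
      exact ⟨(hmeas j).aestronglyMeasurable, lt_of_le_of_lt h ENNReal.ofReal_lt_top⟩
    -- 1 ≤ 2 K^2
    have hone : (1:ℝ) ≤ 2 * K ^ 2 := by
      have hmem2 : MemLp (y 0) 2 μ := (hmem4 0).mono_exponent (by norm_num)
      have he := hmem2.eLpNorm_eq_integral_rpow_norm (by norm_num) (by norm_num)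
      have hint : (∫ ω, ‖y 0 ω‖ ^ ((2:ℝ≥0∞).toReal) ∂μ) = 1 := by
        rw [← hvar 0]
        apply integral_congr_ae
        refine Filter.Eventually.of_forall fun ω => ?_
        show ‖y 0 ω‖ ^ ((2:ℝ≥0∞).toReal) = y 0 ω ^ 2
        rw [Real.norm_eq_abs, (by norm_num : ((2:ℝ≥0∞).toReal) = (2:ℝ)), Real.rpow_two, sq_abs]
      rw [hint] at he
      simp only [Real.one_rpow, ENNReal.ofReal_one] at he
      have h := hsub 0 2 (by norm_num)
      rw [h2eq, he] at h
      have h1 : (1:ℝ) ≤ K * Real.sqrt 2 := (ENNReal.one_le_ofReal).mp h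
      nlinarith [Real.sq_sqrt (by norm_num : (0:ℝ) ≤ 2), Real.sqrt_nonneg 2, hK]
    have hKinv : K⁻¹ ^ 2 ≤ 2 := by
      have hu : K⁻¹ ^ 2 * (2 * K ^ 2) = 2 := by field_simp
      nlinarith [sq_nonneg K⁻¹, hone, hu]
    -- fourth moments
    have hsqrt4 : Real.sqrt 4 = 2 := by
      rw [show (4:ℝ) = 2 ^ 2 by norm_num, Real.sqrt_sq (by norm_num)]
    have h4m : ∀ j, ∫ ω, (y j ω) ^ 4 ∂μ ≤ 16 * K ^ 4 := by
      intro j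
      have he := (hmem4 j).eLpNorm_eq_integral_rpow_norm (by norm_num) (by norm_num)
      have hint : (∫ ω, ‖y j ω‖ ^ ((4:ℝ≥0∞).toReal) ∂μ) = ∫ ω, (y j ω) ^ 4 ∂μ := by
        apply integral_congr_ae
        refine Filter.Eventually.of_forall fun ω => ?_
        show ‖y j ω‖ ^ ((4:ℝ≥0∞).toReal) = y j ω ^ 4
        rw [Real.norm_eq_abs, (by norm_num : ((4:ℝ≥0∞).toReal) = (4:ℝ)),
          (by norm_num : (4:ℝ) = ((4:ℕ):ℝ)), Real.rpow_natCast]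
        exact Even.pow_abs (by decide) _
      rw [hint] at he
      have h := hsub j 4 (by norm_num)
      rw [h4eq, he, hsqrt4] at h
      set I4 := ∫ ω, (y j ω) ^ 4 ∂μ with hI4
      have hI4nn : 0 ≤ I4 := integral_nonneg fun ω => by positivity
      have hle : I4 ^ (((4:ℝ≥0∞).toReal)⁻¹) ≤ K * 2 :=
        (ENNReal.ofReal_le_ofReal_iff (by positivity)).mp h
      have h14 : ((4:ℝ≥0∞).toReal)⁻¹ = (4:ℝ)⁻¹ := by norm_num
      rw [h14] at hle
      have hpow := pow_le_pow_left₀ (Real.rpow_nonneg hI4nn _) hle 4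
      have heq : (I4 ^ ((4:ℝ)⁻¹)) ^ (4:ℕ) = I4 := by
        rw [← Real.rpow_natCast (I4 ^ ((4:ℝ)⁻¹)) 4, ← Real.rpow_mul hI4nn,
          (by norm_num : (4:ℝ)⁻¹ * ((4:ℕ):ℝ) = (1:ℝ)), Real.rpow_one]
      rw [heq] at hpow
      nlinarith [hpow]
    have hB : (1:ℝ) ≤ 16 * K ^ 4 := by nlinarith [hone, sq_nonneg K]
    -- the span statement
    have hspan : ∀ (s : Finset ℕ) (c : ℕ → ℝ),
        ENNReal.ofReal ((1/2 * K⁻¹ ^ 2 / 16) ^ 2) ≤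
          μ {ω | (1/2 * K⁻¹ ^ 2 / 16) *
              Real.sqrt (∫ ω', (∑ j ∈ s, c j * y j ω') ^ 2 ∂μ) ≤ |∑ j ∈ s, c j * y j ω|} := by
      intro s c
      obtain ⟨hm, _, hvar', h4'⟩ := moments y hmeas hind hmean hvar (16 * K ^ 4) hB h4m hmem4 c s
      set t := ∑ j ∈ s, c j ^ 2 with htdef
      have htnn : 0 ≤ t := Finset.sum_nonneg fun j _ => by positivity
      set a : ℝ := 1/2 * K⁻¹ ^ 2 / 16 with hadef
      have ha0 : 0 ≤ a := by positivity
      have ha1 : a ≤ 1 := by rw [hadef]; nlinarith [hKinv]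
      have ha2 : a ^ 2 ≤ 1 / 256 := by rw [hadef]; nlinarith [hKinv, sq_nonneg K⁻¹]
      rw [hvar']
      rcases eq_or_lt_of_le htnn with h0 | htpos
      · have hset : {ω | a * Real.sqrt t ≤ |∑ j ∈ s, c j * y j ω|} = Set.univ := by
          ext ω
          simp only [Set.mem_setOf_eq, Set.mem_univ, iff_true]
          rw [← h0, Real.sqrt_zero, mul_zero]
          exact abs_nonneg _
        rw [hset]
        simp only [measure_univ]
        exact ENNReal.ofReal_le_one.mpr (by nlinarith [ha2])
      · have hPZ := PZ (μ := μ) _ (Finset.measurable_sum _ fun j _ => (hmeas j).const_mul _)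
          hm t (3 * (16 * K ^ 4) * t ^ 2) a hvar' h4' ha0 ha1
        refine le_trans (ENNReal.ofReal_le_ofReal ?_) hPZ
        have hiK : K⁻¹ ^ 2 * K ^ 2 = 1 := by field_simp
        have hfrac : (1 - a ^ 2) ^ 2 * t ^ 2 / (3 * (16 * K ^ 4) * t ^ 2)
            = (1 - a ^ 2) ^ 2 / (48 * K ^ 4) := by
          rw [div_eq_div_iff (by positivity) (by positivity)]
          ring
        rw [hfrac]
        rw [le_div_iff₀ (by positivity)]
        have key : a ^ 2 * (48 * K ^ 4) = 3 / 64 * (K⁻¹ ^ 2 * K ^ 2) ^ 2 := by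
          rw [hadef]; ring
        rw [key, hiK]
        nlinarith [ha2]
    refine ⟨hspan, ?_⟩
    intro n x
    classical
    set c : ℕ → ℝ := fun j => if h : j < n then x ⟨j, h⟩ else 0 with hcdef
    have hsum : ∀ ω, (∑ i, x i * y i ω) = ∑ j ∈ Finset.range n, c j * y j ω := by
      intro ω
      rw [← Fin.sum_univ_eq_sum_range (fun j => c j * y j ω) n]
      apply Finset.sum_congr rfl
      intro i _
      rw [hcdef]
      simp [i.isLt]
    have hsum2 : (∑ j ∈ Finset.range n, c j ^ 2) = ‖x‖ ^ 2 := by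
      rw [← Fin.sum_univ_eq_sum_range (fun j => c j ^ 2) n, EuclideanSpace.norm_eq,
        Real.sq_sqrt (Finset.sum_nonneg fun i _ => by positivity)]
      apply Finset.sum_congr rfl
      intro i _
      rw [hcdef]
      simp [i.isLt, Real.norm_eq_abs, sq_abs]
    have hvar' : (∫ ω', (∑ j ∈ Finset.range n, c j * y j ω') ^ 2 ∂μ)
        = ∑ j ∈ Finset.range n, c j ^ 2 :=
      (moments y hmeas hind hmean hvar (16 * K ^ 4) hB h4m hmem4 c (Finset.range n)).2.2.1
    have h := hspan (Finset.range n) c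
    have hset : {ω | (1/2 * K⁻¹ ^ 2 / 16) *
          Real.sqrt (∫ ω', (∑ j ∈ Finset.range n, c j * y j ω') ^ 2 ∂μ)
          ≤ |∑ j ∈ Finset.range n, c j * y j ω|}
        = {ω | (1/2 * K⁻¹ ^ 2 / 16) * ‖x‖ ≤ |∑ i, x i * y i ω|} := by
      ext ω
      simp only [Set.mem_setOf_eq]
      rw [hsum ω, hvar', hsum2, Real.sqrt_sq (norm_nonneg x)]
    rw [hset] at h
    exact h
end
end

section
/- Let (y_j)_{j=1}^n be an independent sequence of random variables and let (v_j)_{j=1}^m be independent random vectors in ℓ₂ⁿ each with the same distribution as v = (y₁,…,y_n). Suppose a,γ > 0 are such that Prob(|⟨x,v⟩| ≥ a‖x‖) ≥ γ for all x ∈ ℓ₂ⁿ. Then for all x,y ∈ ℓ₂ⁿ with disjoint supports, Prob( |J_{x,y}(a)| ≤ (γ²/2)m ) ≤ exp(−γ⁴m/2), where J_{x,y}(b) = { j ∈ {1,…,m} : |⟨x,v_j⟩| ≥ b‖x‖ and |⟨y,v_j⟩| ≥ b‖y‖ }. -/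
open MeasureTheory ProbabilityTheory

noncomputable section

/-- Hoeffding-type bound on the mgf of a Bernoulli random variable. -/
lemma bern_mgf_bound {p t : ℝ} (hp0 : 0 ≤ p) (hp1 : p ≤ 1) (ht : t ≤ 0) :
    1 - p + p * Real.exp t ≤ Real.exp (p * t + t ^ 2 / 8) := by
  set D : ℝ → ℝ := fun s => 1 - p + p * Real.exp s with hDdef
  have hD : ∀ s, 0 < D s := by
    intro s
    have h1 := Real.exp_pos s
    rcases lt_or_eq_of_le hp1 with h | h
    · have : 0 ≤ p * Real.exp s := mul_nonneg hp0 h1.le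
      simp only [hDdef]; nlinarith
    · simp only [hDdef, ← h]; nlinarith
  set φ : ℝ → ℝ := fun s => p * s + s ^ 2 / 8 - Real.log (D s) with hφdef
  set φ' : ℝ → ℝ := fun s => p + s / 4 - p * Real.exp s / D s with hφ'def
  have hd : ∀ s, HasDerivAt D (p * Real.exp s) s := fun s =>
    ((Real.hasDerivAt_exp s).const_mul p).const_add (1 - p)
  have hφ : ∀ s, HasDerivAt φ (φ' s) s := by
    intro s
    have h1 : HasDerivAt (fun s : ℝ => p * s + s ^ 2 / 8) (p * 1 + ↑2 * s ^ (2 - 1) / 8) s :=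
      ((hasDerivAt_id s).const_mul p).add ((hasDerivAt_pow 2 s).div_const 8)
    have h2 : HasDerivAt (fun s => Real.log (D s)) (p * Real.exp s / D s) s :=
      (hd s).log (hD s).ne'
    have := h1.sub h2
    refine this.congr_deriv ?_
    ring
  have hφ' : ∀ s, HasDerivAt φ' (1 / 4 - p * Real.exp s * (1 - p) / (D s) ^ 2) s := by
    intro s
    have h1 : HasDerivAt (fun s : ℝ => p + s / 4) (1 / 4) s := by
      simpa using ((hasDerivAt_id s).div_const 4).const_add p
    have h2 : HasDerivAt (fun s => p * Real.exp s / D s)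
        ((p * Real.exp s * D s - p * Real.exp s * (p * Real.exp s)) / (D s) ^ 2) s :=
      ((Real.hasDerivAt_exp s).const_mul p).div (hd s) (hD s).ne'
    have := h1.sub h2
    refine this.congr_deriv ?_
    have hne : (D s) ^ 2 ≠ 0 := pow_ne_zero 2 (hD s).ne'
    field_simp
    simp only [hDdef]
    ring
  have hψ : ∀ s, 0 ≤ 1 / 4 - p * Real.exp s * (1 - p) / (D s) ^ 2 := by
    intro s
    rw [sub_nonneg, div_le_iff₀ (pow_pos (hD s) 2)]
    have h1 := Real.exp_pos s
    simp only [hDdef]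
    nlinarith [sq_nonneg (1 - p - p * Real.exp s)]
  have hmono : Monotone φ' :=
    monotone_of_deriv_nonneg (fun s => (hφ' s).differentiableAt)
      (fun s => by rw [(hφ' s).deriv]; exact hψ s)
  have hφ'0 : φ' 0 = 0 := by
    have hD0 : D 0 = 1 := by simp [hDdef]
    simp [hφ'def, hD0]
  have hanti : AntitoneOn φ (Set.Iic 0) := by
    refine antitoneOn_of_deriv_nonpos (convex_Iic 0)
      (fun s _ => (hφ s).continuousAt.continuousWithinAt)
      (fun s _ => (hφ s).differentiableAt.differentiableWithinAt) ?_
    intro s hs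
    rw [interior_Iic] at hs
    rw [(hφ s).deriv]
    calc φ' s ≤ φ' 0 := hmono hs.le
    _ = 0 := hφ'0
  have hφ0 : φ 0 = 0 := by
    have hD0 : D 0 = 1 := by simp [hDdef]
    simp [hφdef, hD0]
  have hkey : 0 ≤ φ t := by
    have := hanti (Set.mem_Iic.2 ht) (Set.mem_Iic.2 le_rfl) ht
    rw [hφ0] at this; exact this
  have hlog : Real.log (D t) ≤ p * t + t ^ 2 / 8 := by
    simp only [hφdef] at hkey; linarith
  calc D t = Real.exp (Real.log (D t)) := (Real.exp_log (hD t)).symm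
  _ ≤ Real.exp (p * t + t ^ 2 / 8) := Real.exp_le_exp.2 hlog

/-- Lemma 4.8: if `(vⱼ)_{j=1}^m` are independent copies of `v = (y₁,…,y_n)` (with independent
coordinates `(yᵢ)`) satisfying `Prob(|⟨x,v⟩| ≥ a‖x‖) ≥ γ` for all `x ∈ ℓ₂ⁿ`, then for all
`x, z ∈ ℓ₂ⁿ` with disjoint supports,
`Prob(|J_{x,z}(a)| ≤ (γ²/2)m) ≤ exp(-γ⁴m/2)`, where
`J_{x,z}(b) = {j : |⟨x,vⱼ⟩| ≥ b‖x‖ and |⟨z,vⱼ⟩| ≥ b‖z‖}`. -/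
theorem good_index_set_large_with_high_probability
    (n m : ℕ) (Ω : Type) [MeasurableSpace Ω] (μ : Measure Ω) [IsProbabilityMeasure μ]
    (y : Fin n → Ω → ℝ) (h_meas : ∀ i, Measurable (y i))
    (h_indep : iIndepFun y μ)
    (v : Fin m → Ω → EuclideanSpace ℝ (Fin n)) (hv_meas : ∀ j, Measurable (v j))
    (hv_indep : iIndepFun v μ)
    (hv_dist : ∀ j, IdentDistrib (v j)
      (fun ω => (EuclideanSpace.equiv (Fin n) ℝ).symm fun i => y i ω) μ μ)
    (a γ : ℝ) (ha : 0 < a) (hγ : 0 < γ)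
    (h_prob : ∀ x : EuclideanSpace ℝ (Fin n),
      ENNReal.ofReal γ ≤ μ {ω | a * ‖x‖ ≤ |∑ i, x i * y i ω|})
    (x z : EuclideanSpace ℝ (Fin n)) (h_disj : ∀ i, x i = 0 ∨ z i = 0) :
    μ {ω | (({j : Fin m |
        a * ‖x‖ ≤ |∑ i, x i * v j ω i| ∧ a * ‖z‖ ≤ |∑ i, z i * v j ω i|} : Set (Fin m)).ncard : ℝ)
          ≤ γ ^ 2 / 2 * m} ≤
      ENNReal.ofReal (Real.exp (-(γ ^ 4 * m / 2))) := by
  classical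
  -- γ ≤ 1
  have hγ1 : γ ≤ 1 := by
    have h0 := h_prob 0
    have heq : {ω | a * ‖(0 : EuclideanSpace ℝ (Fin n))‖ ≤
        |∑ i, (0 : EuclideanSpace ℝ (Fin n)) i * y i ω|} = Set.univ := by
      ext ω; simp
    rw [heq, measure_univ] at h0
    exact ENNReal.ofReal_le_one.mp h0
  -- the good set in Euclidean space
  have hmsum : ∀ c : EuclideanSpace ℝ (Fin n),
      Measurable fun w : EuclideanSpace ℝ (Fin n) => ∑ i, c i * w i := by
    intro c
    exact Finset.measurable_sum _ fun i _ =>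
      ((measurable_pi_apply i).comp (WithLp.measurable_ofLp 2 (Fin n → ℝ))).const_mul _
  set B : Set (EuclideanSpace ℝ (Fin n)) :=
    {w | a * ‖x‖ ≤ |∑ i, x i * w i| ∧ a * ‖z‖ ≤ |∑ i, z i * w i|} with hBdef
  have hB : MeasurableSet B := by
    rw [hBdef, Set.setOf_and]
    exact (measurableSet_le measurable_const (hmsum x).abs).inter
      (measurableSet_le measurable_const (hmsum z).abs)
  -- indicator random variables
  set X : Fin m → Ω → ℝ := fun j ω => B.indicator (fun _ => (1 : ℝ)) (v j ω) with hXdef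
  have hX_meas : ∀ j, Measurable (X j) := fun j =>
    (measurable_const.indicator hB).comp (hv_meas j)
  have hX_indep : iIndepFun X μ :=
    hv_indep.comp (fun _ => B.indicator fun _ => (1 : ℝ)) fun _ => measurable_const.indicator hB
  have hXval : ∀ j ω, X j ω = if v j ω ∈ B then 1 else 0 := fun j ω => by
    simp [hXdef, Set.indicator_apply]
  -- counting
  have hcount : ∀ ω, (({j : Fin m |
      a * ‖x‖ ≤ |∑ i, x i * v j ω i| ∧ a * ‖z‖ ≤ |∑ i, z i * v j ω i|} : Set (Fin m)).ncard : ℝ)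
      = ∑ j, X j ω := by
    intro ω
    have h1 : ∑ j, X j ω = ((Finset.univ.filter fun j : Fin m => v j ω ∈ B).card : ℝ) := by
      simp only [hXval]
      rw [Finset.sum_boole]
    rw [h1]
    have h2 : ({j : Fin m |
        a * ‖x‖ ≤ |∑ i, x i * v j ω i| ∧ a * ‖z‖ ≤ |∑ i, z i * v j ω i|} : Set (Fin m))
        = {j : Fin m | v j ω ∈ B} := rfl
    rw [h2, Set.ncard_eq_toFinset_card']
    congr 1
    simp [Set.toFinset_setOf]
  -- probability of each indicator
  have hpre : ∀ j, MeasurableSet (v j ⁻¹' B) := fun j => hB.preimage (hv_meas j)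
  have hpj_lb : ∀ j, ENNReal.ofReal (γ * γ) ≤ μ (v j ⁻¹' B) := by
    intro j
    rw [(hv_dist j).measure_mem_eq hB]
    set S : Finset (Fin n) := Finset.univ.filter fun i => x i ≠ 0 with hSdef
    have hgx : Measurable fun g : {i // i ∈ S} → ℝ => ∑ i, x i.1 * g i :=
      Finset.measurable_sum _ fun i _ => (measurable_pi_apply i).const_mul _
    have hgz : Measurable fun g : {i // i ∈ Sᶜ} → ℝ => ∑ i, z i.1 * g i :=
      Finset.measurable_sum _ fun i _ => (measurable_pi_apply i).const_mul _
    have hind := ((h_indep.indepFun_finset S Sᶜ disjoint_compl_right h_meas).comp hgx hgz)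
    have hfx : ((fun g : {i // i ∈ S} → ℝ => ∑ i, x i.1 * g i) ∘
        fun ω (i : {i // i ∈ S}) => y i.1 ω) = fun ω => ∑ i, x i * y i ω := by
      funext ω
      simp only [Function.comp_apply]
      rw [Finset.sum_coe_sort S fun i => x i * y i ω]
      exact Finset.sum_subset (Finset.subset_univ S) fun i _ hi => by
        have : x i = 0 := by
          by_contra hxi
          exact hi (by simp [hSdef, hxi])
        simp [this]
    have hfz : ((fun g : {i // i ∈ Sᶜ} → ℝ => ∑ i, z i.1 * g i) ∘
        fun ω (i : {i // i ∈ Sᶜ}) => y i.1 ω) = fun ω => ∑ i, z i * y i ω := by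
      funext ω
      simp only [Function.comp_apply]
      rw [Finset.sum_coe_sort (Sᶜ) fun i => z i * y i ω]
      exact Finset.sum_subset (Finset.subset_univ _) fun i _ hi => by
        have hxi : x i ≠ 0 := by
          simp only [hSdef, Finset.mem_compl, Finset.mem_filter, Finset.mem_univ,
            true_and, not_not] at hi
          exact hi
        have : z i = 0 := (h_disj i).resolve_left hxi
        simp [this]
    rw [hfx, hfz] at hind
    have hmx : MeasurableSet {r : ℝ | a * ‖x‖ ≤ |r|} :=
      measurableSet_le measurable_const measurable_abs
    have hmz : MeasurableSet {r : ℝ | a * ‖z‖ ≤ |r|} :=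
      measurableSet_le measurable_const measurable_abs
    have hmul := hind.measure_inter_preimage_eq_mul _ _ hmx hmz
    have hpreq : ((fun ω => (EuclideanSpace.equiv (Fin n) ℝ).symm fun i => y i ω) ⁻¹' B)
        = ((fun ω => ∑ i, x i * y i ω) ⁻¹' {r : ℝ | a * ‖x‖ ≤ |r|}) ∩
          ((fun ω => ∑ i, z i * y i ω) ⁻¹' {r : ℝ | a * ‖z‖ ≤ |r|}) := by
      ext ω
      simp only [Set.mem_preimage, Set.mem_inter_iff, Set.mem_setOf_eq, hBdef]
      rfl
    rw [hpreq, hmul, ENNReal.ofReal_mul hγ.le]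
    exact mul_le_mul' (h_prob x) (h_prob z)
  set pj : Fin m → ℝ := fun j => (μ (v j ⁻¹' B)).toReal with hpjdef
  have hpj1 : ∀ j, pj j ≤ 1 := by
    intro j
    have := ENNReal.toReal_mono ENNReal.one_ne_top (prob_le_one (μ := μ) (s := v j ⁻¹' B))
    simpa using this
  have hpjγ : ∀ j, γ ^ 2 ≤ pj j := by
    intro j
    have := ENNReal.toReal_mono (measure_ne_top μ _) (hpj_lb j)
    rwa [ENNReal.toReal_ofReal (mul_nonneg hγ.le hγ.le), ← sq] at this
  -- mgf computations
  set t : ℝ := -(2 * γ ^ 2) with htdef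
  have ht : t ≤ 0 := by rw [htdef]; nlinarith [sq_nonneg γ]
  have hXind_eq : ∀ j, X j = (v j ⁻¹' B).indicator (fun _ => (1 : ℝ)) := by
    intro j
    funext ω
    rw [hXval]
    by_cases h : v j ω ∈ B <;> simp [Set.indicator_apply, h]
  have hXint : ∀ j, Integrable (X j) μ := by
    intro j
    rw [hXind_eq j]
    exact (integrable_const 1).indicator (hpre j)
  have hint_X : ∀ j, ∫ ω, X j ω ∂μ = pj j := by
    intro j
    rw [show (fun ω => X j ω) = X j from rfl, hXind_eq j,
      integral_indicator_const (1 : ℝ) (hpre j)]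
    simp [hpjdef, measureReal_def]
  have hint_exp : ∀ j, Integrable (fun ω => Real.exp (t * X j ω)) μ := by
    intro j
    refine (integrable_const (1 : ℝ)).mono'
      (((hX_meas j).const_mul t).exp.aestronglyMeasurable) (ae_of_all μ fun ω => ?_)
    rw [Real.norm_eq_abs, abs_of_pos (Real.exp_pos _)]
    exact Real.exp_le_one_iff.2 (mul_nonpos_of_nonpos_of_nonneg ht (by rw [hXval]; split <;> norm_num))
  have hmgf : ∀ j, mgf (X j) μ t = 1 + (Real.exp t - 1) * pj j := by
    intro j
    have heq : (fun ω => Real.exp (t * X j ω)) = fun ω => 1 + (Real.exp t - 1) * X j ω := by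
      funext ω
      rw [hXval]
      by_cases h : v j ω ∈ B
      · simp only [h, if_true, mul_one]
        ring
      · simp [h]
    simp only [mgf]
    rw [heq, integral_add (integrable_const 1) ((hXint j).const_mul _), integral_const,
      integral_const_mul, hint_X j]
    simp
  have hint_sum : Integrable (fun ω => Real.exp (t * (∑ j, X j) ω)) μ :=
    hX_indep.integrable_exp_mul_sum hX_meas (s := Finset.univ) fun j _ => hint_exp j
  have hchern := measure_le_le_exp_mul_mgf (μ := μ) (X := ∑ j, X j) (γ ^ 2 / 2 * m) ht hint_sum
  have hmgfsum : mgf (∑ j, X j) μ t = ∏ j, mgf (X j) μ t := hX_indep.mgf_sum hX_meas Finset.univ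
  have hbound_each : ∀ j, mgf (X j) μ t ≤ Real.exp (γ ^ 2 * t + t ^ 2 / 8) := by
    intro j
    rw [hmgf j]
    have hexp1 : Real.exp t ≤ 1 := Real.exp_le_one_iff.2 ht
    have h1 : 1 + (Real.exp t - 1) * pj j ≤ 1 - γ ^ 2 + γ ^ 2 * Real.exp t := by
      nlinarith [hpjγ j, hpj1 j]
    exact h1.trans (bern_mgf_bound (by positivity) (by nlinarith) ht)
  have hprod_le : ∏ j, mgf (X j) μ t ≤ Real.exp (γ ^ 2 * t + t ^ 2 / 8) ^ m := by
    calc ∏ j, mgf (X j) μ t ≤ ∏ _j : Fin m, Real.exp (γ ^ 2 * t + t ^ 2 / 8) :=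
      Finset.prod_le_prod (fun j _ => mgf_nonneg) (fun j _ => hbound_each j)
    _ = _ := by simp [Finset.prod_const]
  have hfinal : Real.exp (-t * (γ ^ 2 / 2 * m)) * Real.exp (γ ^ 2 * t + t ^ 2 / 8) ^ m
      ≤ Real.exp (-(γ ^ 4 * m / 2)) := by
    rw [← Real.exp_nat_mul, ← Real.exp_add]
    apply Real.exp_le_exp.2
    apply le_of_eq
    rw [htdef]; ring
  have hset : {ω | (({j : Fin m |
      a * ‖x‖ ≤ |∑ i, x i * v j ω i| ∧ a * ‖z‖ ≤ |∑ i, z i * v j ω i|} : Set (Fin m)).ncard : ℝ)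
        ≤ γ ^ 2 / 2 * m} = {ω | (∑ j, X j) ω ≤ γ ^ 2 / 2 * m} := by
    ext ω
    simp only [Set.mem_setOf_eq, Finset.sum_apply]
    rw [hcount ω]
  rw [hset, ← ENNReal.ofReal_toReal (measure_ne_top μ _)]
  apply ENNReal.ofReal_le_ofReal
  calc (μ {ω | (∑ j, X j) ω ≤ γ ^ 2 / 2 * m}).toReal
      ≤ Real.exp (-t * (γ ^ 2 / 2 * m)) * mgf (∑ j, X j) μ t := hchern
  _ = Real.exp (-t * (γ ^ 2 / 2 * m)) * ∏ j, mgf (X j) μ t := by rw [hmgfsum]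
  _ ≤ Real.exp (-t * (γ ^ 2 / 2 * m)) * Real.exp (γ ^ 2 * t + t ^ 2 / 8) ^ m :=
      mul_le_mul_of_nonneg_left hprod_le (Real.exp_pos _).le
  _ ≤ _ := hfinal
end
end

section
/- Let n ∈ ℕ, let (y_j)_{j=1}^n be an orthonormal sequence of independent, mean-zero random variables in L²([0,1]), and let a,γ > 0 be such that Prob(|f| ≥ a‖f‖_{L²}) ≥ γ for all f ∈ span(y_j)_{j=1}^n. Let m ∈ ℕ and let (v_j)_{j=1}^m be independent random vectors in ℓ₂ⁿ each with the same distribution as v = (y₁,…,y_n). Then for all x,y ∈ ℓ₂ⁿ with disjoint supports and all z ∈ ℓ₂ⁿ: Prob( |J^z_{x,y}(a, 2γ⁻¹)| ≤ (γ²/4)m ) ≤ exp(−γ⁴m/8), where J^z_{x,y}(b,s) = { j ∈ {1,…,m} : |⟨x,v_j⟩| ≥ b‖x‖ and |⟨y,v_j⟩| ≥ b‖y‖, and |⟨z,v_j⟩| ≤ s‖z‖, and ‖v_j‖ ≤ 2γ⁻¹√n }. -/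
open MeasureTheory ProbabilityTheory
open Real

noncomputable section

/-- Lebesgue measure on `[0,1]`, viewed as a probability space. -/
def μ01 : Measure ℝ := volume.restrict (Set.Icc 0 1)

instance : IsProbabilityMeasure μ01 := by constructor; simp [μ01]

lemma l2_mul_integrable {α : Type*} [MeasurableSpace α] {μ : Measure α} {f g : α → ℝ}
    (hf : MemLp f 2 μ) (hg : MemLp g 2 μ) : Integrable (fun t => f t * g t) μ := by
  have h1 : Integrable (fun t => (f t ^ 2 + g t ^ 2) / 2) μ :=
    (hf.integrable_sq.add hg.integrable_sq).div_const 2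
  refine Integrable.mono' h1 (hf.1.mul hg.1) (ae_of_all _ fun t => ?_)
  rw [Real.norm_eq_abs, abs_mul]
  nlinarith [sq_nonneg (|f t| - |g t|), sq_abs (f t), sq_abs (g t), abs_nonneg (f t),
    abs_nonneg (g t)]

lemma cheby_sq {α : Type*} [MeasurableSpace α] {μ : Measure α} [IsProbabilityMeasure μ]
    {f : α → ℝ} (hi : Integrable (fun t => f t ^ 2) μ)
    {s M : ℝ} (hs : 0 < s) (hM : ∫ t, f t ^ 2 ∂μ ≤ M) :
    μ {t | s < |f t|} ≤ ENNReal.ofReal (M / s ^ 2) := by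
  have hsub : {t | s < |f t|} ⊆ {t | s ^ 2 ≤ f t ^ 2} := by
    intro t ht
    simp only [Set.mem_setOf_eq] at *
    calc s ^ 2 ≤ |f t| ^ 2 := by nlinarith [abs_nonneg (f t)]
    _ = f t ^ 2 := sq_abs _
  refine le_trans (measure_mono hsub) ?_
  have hmark := mul_meas_ge_le_integral_of_nonneg
    (ae_of_all μ fun t => sq_nonneg (f t)) hi (s ^ 2)
  have hM0 : 0 ≤ M := le_trans (integral_nonneg fun t => sq_nonneg (f t)) hM
  rw [ENNReal.le_ofReal_iff_toReal_le (measure_ne_top _ _) (by positivity)]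
  rw [le_div_iff₀ (by positivity), mul_comm]
  exact le_trans hmark hM

lemma moment_eq {n : ℕ} {α : Type*} [MeasurableSpace α] {μ : Measure α} {y : Fin n → α → ℝ}
    (h_L2 : ∀ j, MemLp (y j) 2 μ)
    (h_on : ∀ i j, ∫ t, y i t * y j t ∂μ = if i = j then 1 else 0)
    (c : Fin n → ℝ) : ∫ t, (∑ j, c j * y j t) ^ 2 ∂μ = ∑ j, c j ^ 2 := by
  have hbase : ∀ i j : Fin n, Integrable (fun t => (c i * c j) * (y i t * y j t)) μ :=
    fun i j => (l2_mul_integrable (h_L2 i) (h_L2 j)).const_mul _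
  have hexp : ∀ t, (∑ j, c j * y j t) ^ 2 = ∑ i, ∑ j, (c i * c j) * (y i t * y j t) := by
    intro t
    rw [sq, Finset.sum_mul_sum]
    exact Finset.sum_congr rfl fun i _ => Finset.sum_congr rfl fun j _ => by ring
  simp_rw [hexp]
  rw [integral_finset_sum _ (fun i _ => integrable_finset_sum _ (fun j _ => hbase i j))]
  have hinner : ∀ i : Fin n, ∫ t, ∑ j, (c i * c j) * (y i t * y j t) ∂μ = c i ^ 2 := by
    intro i
    rw [integral_finset_sum _ (fun j _ => hbase i j)]
    have hterm : ∀ j, ∫ t, (c i * c j) * (y i t * y j t) ∂μ = if i = j then c i ^ 2 else 0 := by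
      intro j
      rw [integral_const_mul, h_on i j]
      by_cases h : i = j
      · subst h; simp [sq]
      · simp [h]
    simp_rw [hterm]
    simp
  simp_rw [hinner]

lemma bernoulli_mgf_le {p : ℝ} (hp0 : 0 ≤ p) (hp1 : p ≤ 1) (t : ℝ) :
    1 - p + p * Real.exp t ≤ Real.exp (t * p + t ^ 2 / 8) := by
  have hpos : ∀ s : ℝ, 0 < 1 - p + p * exp s := by
    intro s
    rcases hp0.eq_or_lt with h | h
    · simp [← h]
    · have := mul_pos h (exp_pos s); linarith
  set h : ℝ → ℝ := fun s => 1 - p + p * exp s with hh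
  set q : ℝ → ℝ := fun s => p * exp s / h s with hq
  set g : ℝ → ℝ := fun s => Real.log (h s) - p * s with hg
  have hq0 : ∀ s, 0 ≤ q s := fun s =>
    div_nonneg (mul_nonneg hp0 (exp_pos s).le) (hpos s).le
  have hq1 : ∀ s, q s ≤ 1 := by
    intro s
    rw [hq, div_le_one (hpos s)]
    show p * exp s ≤ 1 - p + p * exp s
    linarith
  have hder_h : ∀ s, HasDerivAt h (p * exp s) s := by
    intro s
    exact ((Real.hasDerivAt_exp s).const_mul p).const_add (1 - p)
  have hder_g : ∀ s, HasDerivAt g (q s - p) s := by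
    intro s
    have h1 : HasDerivAt (fun s => Real.log (h s)) (q s) s := by
      simpa [hq] using (hder_h s).log (hpos s).ne'
    exact (h1.sub ((hasDerivAt_id s).const_mul p)).congr_deriv (by ring)
  have hder_q : ∀ s, HasDerivAt q (q s * (1 - q s)) s := by
    intro s
    have h1 : HasDerivAt (fun s => p * exp s) (p * exp s) s :=
      (Real.hasDerivAt_exp s).const_mul p
    have h2 := h1.div (hder_h s) (hpos s).ne'
    refine h2.congr_deriv ?_
    have e : h s = 1 - p + p * exp s := rfl
    show (p * exp s * h s - p * exp s * (p * exp s)) / h s ^ 2 = q s * (1 - q s)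
    simp only [hq, e]
    field_simp [(hpos s).ne']
  have hq_zero : q 0 = p := by simp [hq, hh]
  have hφ : ∀ s : ℝ, |q s - p| ≤ |s| / 4 := by
    intro s
    have key := Convex.norm_image_sub_le_of_norm_hasDerivWithin_le
      (f := fun s => q s - p) (f' := fun s => q s * (1 - q s)) (C := 1/4) (s := Set.univ)
      (fun x _ => ((hder_q x).sub_const p).hasDerivWithinAt)
      (fun x _ => by
        rw [Real.norm_eq_abs, abs_le]
        constructor <;> nlinarith [hq0 x, hq1 x, sq_nonneg (q x - 1/2)])
      convex_univ (Set.mem_univ 0) (Set.mem_univ s)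
    simp only [hq_zero, sub_self, sub_zero, Real.norm_eq_abs] at key
    linarith
  have hcont : Continuous fun s => q s - p := by
    apply Continuous.sub _ continuous_const
    exact (continuous_const.mul Real.continuous_exp).div
      (continuous_const.add (continuous_const.mul Real.continuous_exp))
      (fun s => (hpos s).ne')
  have hFTC : ∫ s in (0:ℝ)..t, (q s - p) = g t - g 0 := by
    apply intervalIntegral.integral_eq_sub_of_hasDerivAt (fun s _ => hder_g s)
    exact hcont.intervalIntegrable 0 t
  have hg0 : g 0 = 0 := by simp [hg, hh]
  have hquarter : IntervalIntegrable (fun s : ℝ => s / 4) MeasureTheory.volume t 0 ∧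
      IntervalIntegrable (fun s : ℝ => s / 4) MeasureTheory.volume 0 t := by
    constructor <;> exact (by fun_prop : Continuous fun s : ℝ => s / 4).intervalIntegrable _ _
  have hlin : ∫ s in (0:ℝ)..t, s / 4 = t ^ 2 / 8 := by
    rw [intervalIntegral.integral_div, integral_id]; ring
  have hgt : g t ≤ t ^ 2 / 8 := by
    rcases le_or_gt 0 t with ht | ht
    · have hmono : ∫ s in (0:ℝ)..t, (q s - p) ≤ ∫ s in (0:ℝ)..t, s / 4 := by
        apply intervalIntegral.integral_mono_on ht (hcont.intervalIntegrable 0 t) hquarter.2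
        intro s hs
        have := hφ s
        rw [abs_of_nonneg hs.1] at this
        cases abs_le.mp this with | intro h1 h2 => linarith
      rw [hFTC, hg0, sub_zero, hlin] at hmono
      linarith
    · have h1 : ∫ s in t..(0:ℝ), s / 4 ≤ ∫ s in t..(0:ℝ), (q s - p) := by
        apply intervalIntegral.integral_mono_on ht.le hquarter.1 (hcont.intervalIntegrable t 0)
        intro s hs
        have := hφ s
        rw [abs_of_nonpos hs.2] at this
        cases abs_le.mp this with | intro ha hb => linarith
      have h2 : ∫ s in t..(0:ℝ), s / 4 = -(t ^ 2 / 8) := by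
        rw [intervalIntegral.integral_div, integral_id]; ring
      have h3 : (∫ s in t..(0:ℝ), (q s - p)) = -(g t) := by
        rw [intervalIntegral.integral_symm, hFTC, hg0, sub_zero]
      rw [h2, h3] at h1
      linarith
  have hfinal : h t ≤ exp (t * p + t ^ 2 / 8) := by
    calc h t = exp (Real.log (h t)) := ((Real.exp_log (hpos t))).symm
    _ = exp (g t + p * t) := by rw [hg]; ring_nf
    _ ≤ exp (t * p + t ^ 2 / 8) := by
        apply Real.exp_le_exp.mpr; linarith [hgt]
  simpa [hh] using hfinal

/-- Lemma 5.1: let `(yⱼ)_{j=1}^n` be an orthonormal sequence of independent mean-zero random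
variables in `L²([0,1])` with `Prob(|f| ≥ a‖f‖_{L²}) ≥ γ` on its span, and let `(vⱼ)_{j=1}^m` be
independent copies of `v = (y₁,…,y_n)`. Then for all `x, z ∈ ℓ₂ⁿ` with disjoint supports and all
`w ∈ ℓ₂ⁿ`, `Prob(|J^w_{x,z}(a, 2γ⁻¹)| ≤ (γ²/4)m) ≤ exp(-γ⁴m/8)`, where `J^w_{x,z}(b,s)` is the
set of `j` with `|⟨x,vⱼ⟩| ≥ b‖x‖`, `|⟨z,vⱼ⟩| ≥ b‖z‖`, `|⟨w,vⱼ⟩| ≤ s‖w‖` and `‖vⱼ‖ ≤ 2γ⁻¹√n`. -/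
theorem good_index_set_with_control_large_with_high_probability
    (n m : ℕ) (y : Fin n → ℝ → ℝ) (h_meas : ∀ j, Measurable (y j))
    (h_L2 : ∀ j, MemLp (y j) 2 μ01)
    (h_on : ∀ i j, ∫ t, y i t * y j t ∂μ01 = if i = j then 1 else 0)
    (h_indep : iIndepFun y μ01)
    (h_mean : ∀ j, ∫ t, y j t ∂μ01 = 0)
    (a γ : ℝ) (ha : 0 < a) (hγ : 0 < γ)
    (h_prob : ∀ c : Fin n → ℝ,
      ENNReal.ofReal γ ≤
        μ01 {t | a * Real.sqrt (∫ s, (∑ j, c j * y j s) ^ 2 ∂μ01) ≤ |∑ j, c j * y j t|})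
    (Ω : Type) [MeasurableSpace Ω] (μ : Measure Ω) [IsProbabilityMeasure μ]
    (v : Fin m → Ω → EuclideanSpace ℝ (Fin n)) (hv_meas : ∀ j, Measurable (v j))
    (hv_indep : iIndepFun v μ)
    (hv_dist : ∀ j, IdentDistrib (v j)
      (fun t => (EuclideanSpace.equiv (Fin n) ℝ).symm fun i => y i t) μ μ01)
    (x z w : EuclideanSpace ℝ (Fin n)) (h_disj : ∀ i, x i = 0 ∨ z i = 0) :
    μ {ω | (({j : Fin m |
        a * ‖x‖ ≤ |∑ i, x i * v j ω i| ∧ a * ‖z‖ ≤ |∑ i, z i * v j ω i| ∧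
        |∑ i, w i * v j ω i| ≤ 2 * γ⁻¹ * ‖w‖ ∧
        ‖v j ω‖ ≤ 2 * γ⁻¹ * Real.sqrt n} : Set (Fin m)).ncard : ℝ) ≤ γ ^ 2 / 4 * m} ≤
      ENNReal.ofReal (Real.exp (-(γ ^ 4 * m / 8))) := by
  classical
  -- the model random vector and the "good" set
  set V : ℝ → EuclideanSpace ℝ (Fin n) :=
    (fun t => (EuclideanSpace.equiv (Fin n) ℝ).symm fun i => y i t) with hVdef
  set S : Set (EuclideanSpace ℝ (Fin n)) :=
    {u | a * ‖x‖ ≤ |∑ i, x i * u i| ∧ a * ‖z‖ ≤ |∑ i, z i * u i| ∧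
      |∑ i, w i * u i| ≤ 2 * γ⁻¹ * ‖w‖ ∧ ‖u‖ ≤ 2 * γ⁻¹ * Real.sqrt n} with hSdef
  have hsum_meas : ∀ c : EuclideanSpace ℝ (Fin n),
      Measurable fun u : EuclideanSpace ℝ (Fin n) => ∑ i, c i * u i :=
    fun c => Finset.measurable_sum _ fun i _ => ((measurable_pi_apply i).comp (WithLp.measurable_ofLp _ _)).const_mul _
  have hS_meas : MeasurableSet S := by
    rw [hSdef]
    simp only [Set.setOf_and]
    exact ((measurableSet_le measurable_const (hsum_meas x).abs).inter
      ((measurableSet_le measurable_const (hsum_meas z).abs).inter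
        ((measurableSet_le (hsum_meas w).abs measurable_const).inter
          (measurableSet_le measurable_norm measurable_const))))
  have hV_meas : Measurable V := by
    rw [hVdef]
    exact (Homeomorph.measurable (EuclideanSpace.equiv (Fin n) ℝ).symm.toHomeomorph).comp
      (measurable_pi_lambda _ fun i => h_meas i)
  have hident : ∀ j, μ (v j ⁻¹' S) = μ01 (V ⁻¹' S) := fun j =>
    (hv_dist j).measure_mem_eq hS_meas
  -- norms as square sums
  have hnorm_eq : ∀ c : EuclideanSpace ℝ (Fin n), Real.sqrt (∑ i, c i ^ 2) = ‖c‖ := by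
    intro c
    rw [EuclideanSpace.norm_eq]
    congr 1
    exact Finset.sum_congr rfl fun i _ => by rw [Real.norm_eq_abs, sq_abs]
  have hsq_norm : ∀ c : EuclideanSpace ℝ (Fin n), (∑ i, c i ^ 2) = ‖c‖ ^ 2 := by
    intro c
    rw [← hnorm_eq c, Real.sq_sqrt (by positivity)]
  -- h_prob restated
  have hprob' : ∀ c : EuclideanSpace ℝ (Fin n),
      ENNReal.ofReal γ ≤ μ01 {t | a * ‖c‖ ≤ |∑ i, c i * y i t|} := by
    intro c
    have h := h_prob c
    rwa [moment_eq h_L2 h_on c, hnorm_eq c] at h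
  -- independence of the two sums
  have hindepAB : IndepFun (fun t => ∑ i, x i * y i t) (fun t => ∑ i, z i * y i t) μ01 := by
    set Sx := Finset.univ.filter (fun i : Fin n => x i ≠ 0) with hSx
    set Sz := Finset.univ.filter (fun i : Fin n => z i ≠ 0) with hSz
    have hdisj : Disjoint Sx Sz := by
      rw [Finset.disjoint_left]
      intro i hix hiz
      simp only [hSx, hSz, Finset.mem_filter] at hix hiz
      rcases h_disj i with h | h
      exacts [hix.2 h, hiz.2 h]
    have base := h_indep.indepFun_finset Sx Sz hdisj h_meas
    have comp := base.comp
      (φ := fun u : {i // i ∈ Sx} → ℝ => ∑ i : {i // i ∈ Sx}, x i * u i)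
      (ψ := fun u : {i // i ∈ Sz} → ℝ => ∑ i : {i // i ∈ Sz}, z i * u i)
      (Finset.measurable_sum _ fun i _ => (measurable_pi_apply i).const_mul _)
      (Finset.measurable_sum _ fun i _ => (measurable_pi_apply i).const_mul _)
    have ex : ∀ (c : EuclideanSpace ℝ (Fin n)) (Sc : Finset (Fin n))
        (hSc : Sc = Finset.univ.filter (fun i => c i ≠ 0)) (t : ℝ),
        ∑ i : {i // i ∈ Sc}, c i * y i t = ∑ i, c i * y i t := by
      intro c Sc hSc t
      rw [Finset.sum_coe_sort Sc (fun i => c i * y i t), hSc]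
      apply Finset.sum_filter_of_ne
      intro i _ hne h0
      exact hne (by rw [h0, zero_mul])
    have e1 : (fun u : {i // i ∈ Sx} → ℝ => ∑ i : {i // i ∈ Sx}, x i * u i) ∘
        (fun t (i : {i // i ∈ Sx}) => y i t) = fun t => ∑ i, x i * y i t := by
      funext t; exact ex x Sx hSx t
    have e2 : (fun u : {i // i ∈ Sz} → ℝ => ∑ i : {i // i ∈ Sz}, z i * u i) ∘
        (fun t (i : {i // i ∈ Sz}) => y i t) = fun t => ∑ i, z i * y i t := by
      funext t; exact ex z Sz hSz t
    rwa [e1, e2] at comp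
  -- product lower bound on the two main events
  have habs_meas : ∀ c : ℝ, MeasurableSet {r : ℝ | c ≤ |r|} :=
    fun c => measurableSet_le measurable_const measurable_abs
  have hAB : ENNReal.ofReal γ * ENNReal.ofReal γ ≤
      μ01 ({t | a * ‖x‖ ≤ |∑ i, x i * y i t|} ∩ {t | a * ‖z‖ ≤ |∑ i, z i * y i t|}) := by
    have hprod := hindepAB.measure_inter_preimage_eq_mul _ _
      (habs_meas (a * ‖x‖)) (habs_meas (a * ‖z‖))
    calc ENNReal.ofReal γ * ENNReal.ofReal γ
        ≤ μ01 {t | a * ‖x‖ ≤ |∑ i, x i * y i t|} * μ01 {t | a * ‖z‖ ≤ |∑ i, z i * y i t|} :=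
          mul_le_mul' (hprob' x) (hprob' z)
      _ = _ := (hprod).symm
  -- Chebyshev bounds
  have hC : μ01 {t | 2 * γ⁻¹ * ‖w‖ < |∑ i, w i * y i t|} ≤ ENNReal.ofReal (γ ^ 2 / 4) := by
    by_cases hw : w = 0
    · have hempty : {t : ℝ | 2 * γ⁻¹ * ‖w‖ < |∑ i, w i * y i t|} = ∅ := by
        ext t; simp [hw]
      rw [hempty]
      simp
    · have hwpos : 0 < ‖w‖ := norm_pos_iff.mpr hw
      have hs : 0 < 2 * γ⁻¹ * ‖w‖ := by positivity
      have hmem : MemLp (fun t => ∑ i, w i * y i t) 2 μ01 :=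
        memLp_finset_sum _ (fun i _ => (h_L2 i).const_mul (w i))
      have hint : Integrable (fun t => (∑ i, w i * y i t) ^ 2) μ01 := hmem.integrable_sq
      have hM : ∫ t, (∑ i, w i * y i t) ^ 2 ∂μ01 ≤ γ ^ 2 / 4 * (2 * γ⁻¹ * ‖w‖) ^ 2 := by
        rw [moment_eq h_L2 h_on w, hsq_norm w]
        have he : γ ^ 2 / 4 * (2 * γ⁻¹ * ‖w‖) ^ 2 = ‖w‖ ^ 2 := by
          field_simp
          ring
        rw [he]
      have hcheb := cheby_sq hint hs hM
      rwa [mul_div_assoc, div_self (by positivity), mul_one] at hcheb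
  have hD : μ01 {t | 2 * γ⁻¹ * Real.sqrt n < ‖V t‖} ≤ ENNReal.ofReal (γ ^ 2 / 4) := by
    have hVnorm : ∀ t, ‖V t‖ = Real.sqrt (∑ i, y i t ^ 2) := fun t => (hnorm_eq (V t)).symm
    by_cases hn : n = 0
    · have hempty : {t : ℝ | 2 * γ⁻¹ * Real.sqrt n < ‖V t‖} = ∅ := by
        ext t
        have h0 : ‖V t‖ = 0 := by
          rw [hVnorm t]
          have hz : (∑ i, y i t ^ 2) = 0 :=
            Finset.sum_eq_zero fun i _ => absurd i.isLt (by simp [hn])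
          rw [hz, Real.sqrt_zero]
        simp only [Set.mem_setOf_eq, Set.mem_empty_iff_false, iff_false, not_lt, h0]
        positivity
      rw [hempty]; simp
    · have hnpos : (0:ℝ) < n := by exact_mod_cast Nat.pos_of_ne_zero hn
      have hs : 0 < 2 * γ⁻¹ * Real.sqrt n :=
        mul_pos (mul_pos two_pos (inv_pos.mpr hγ)) (Real.sqrt_pos.mpr hnpos)
      have hss : ∀ t : ℝ, Real.sqrt (∑ i, y i t ^ 2) ^ 2 = ∑ i, y i t ^ 2 :=
        fun t => Real.sq_sqrt (by positivity)
      have hint : Integrable (fun t => Real.sqrt (∑ i, y i t ^ 2) ^ 2) μ01 := by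
        simp_rw [hss]
        exact integrable_finset_sum _ (fun i _ => (h_L2 i).integrable_sq)
      have hM : ∫ t, Real.sqrt (∑ i, y i t ^ 2) ^ 2 ∂μ01 ≤
          γ ^ 2 / 4 * (2 * γ⁻¹ * Real.sqrt n) ^ 2 := by
        simp_rw [hss]
        rw [integral_finset_sum _ (fun i _ => (h_L2 i).integrable_sq)]
        have hone : ∀ i : Fin n, ∫ t, y i t ^ 2 ∂μ01 = 1 := by
          intro i
          have h := h_on i i
          simp only [if_pos rfl] at h
          simpa [sq] using h
        simp_rw [hone]
        rw [Finset.sum_const, Finset.card_univ, Fintype.card_fin]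
        have he : γ ^ 2 / 4 * (2 * γ⁻¹ * Real.sqrt n) ^ 2 = (n:ℝ) := by
          rw [mul_pow, mul_pow, Real.sq_sqrt hnpos.le]
          field_simp
          ring
        rw [he]
        simp
      have hcheb := cheby_sq hint hs hM
      rw [mul_div_assoc, div_self (by positivity), mul_one] at hcheb
      have hseteq : {t | 2 * γ⁻¹ * Real.sqrt n < ‖V t‖} =
          {t | 2 * γ⁻¹ * Real.sqrt n < |Real.sqrt (∑ i, y i t ^ 2)|} := by
        ext t
        rw [Set.mem_setOf_eq, Set.mem_setOf_eq, hVnorm t,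
          abs_of_nonneg (Real.sqrt_nonneg _)]
      rw [hseteq]
      exact hcheb
  -- union bound
  have hsubset : ({t | a * ‖x‖ ≤ |∑ i, x i * y i t|} ∩ {t | a * ‖z‖ ≤ |∑ i, z i * y i t|}) ⊆
      (V ⁻¹' S ∪ {t | 2 * γ⁻¹ * ‖w‖ < |∑ i, w i * y i t|}) ∪
        {t | 2 * γ⁻¹ * Real.sqrt n < ‖V t‖} := by
    intro t ht
    by_cases h4 : ‖V t‖ ≤ 2 * γ⁻¹ * Real.sqrt n
    · by_cases h3 : |∑ i, w i * y i t| ≤ 2 * γ⁻¹ * ‖w‖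
      · refine Or.inl (Or.inl ?_)
        show V t ∈ S
        rw [hSdef]
        exact ⟨ht.1, ht.2, h3, h4⟩
      · exact Or.inl (Or.inr (not_le.mp h3))
    · exact Or.inr (not_le.mp h4)
  have hkey : ENNReal.ofReal (γ ^ 2 / 2) ≤ μ01 (V ⁻¹' S) := by
    have hub : μ01 ({t | a * ‖x‖ ≤ |∑ i, x i * y i t|} ∩ {t | a * ‖z‖ ≤ |∑ i, z i * y i t|}) ≤
        μ01 (V ⁻¹' S) + ENNReal.ofReal (γ ^ 2 / 4) + ENNReal.ofReal (γ ^ 2 / 4) := by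
      refine le_trans (measure_mono hsubset) ?_
      refine le_trans (measure_union_le _ _) ?_
      exact add_le_add (le_trans (measure_union_le _ _) (add_le_add le_rfl hC)) hD
    have h1 : ENNReal.ofReal (γ ^ 2 / 2) + ENNReal.ofReal (γ ^ 2 / 2) ≤
        μ01 (V ⁻¹' S) + ENNReal.ofReal (γ ^ 2 / 2) := by
      calc ENNReal.ofReal (γ ^ 2 / 2) + ENNReal.ofReal (γ ^ 2 / 2)
          = ENNReal.ofReal γ * ENNReal.ofReal γ := by
            rw [← ENNReal.ofReal_add (by positivity) (by positivity),
              ← ENNReal.ofReal_mul hγ.le]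
            congr 1
            ring
        _ ≤ μ01 ({t | a * ‖x‖ ≤ |∑ i, x i * y i t|} ∩
              {t | a * ‖z‖ ≤ |∑ i, z i * y i t|}) := hAB
        _ ≤ μ01 (V ⁻¹' S) + ENNReal.ofReal (γ ^ 2 / 4) + ENNReal.ofReal (γ ^ 2 / 4) := hub
        _ = μ01 (V ⁻¹' S) + ENNReal.ofReal (γ ^ 2 / 2) := by
            rw [add_assoc, ← ENNReal.ofReal_add (by positivity) (by positivity)]
            congr 1
            ring
    exact (ENNReal.add_le_add_iff_right ENNReal.ofReal_ne_top).mp h1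
  set p : ℝ := (μ01 (V ⁻¹' S)).toReal with hpdef
  have hp_ge : γ ^ 2 / 2 ≤ p :=
    (ENNReal.ofReal_le_iff_le_toReal (measure_ne_top _ _)).mp hkey
  have hp0 : 0 ≤ p := ENNReal.toReal_nonneg
  have hp1 : p ≤ 1 := by
    rw [hpdef]
    have h := prob_le_one (μ := μ01) (s := V ⁻¹' S)
    simpa using ENNReal.toReal_mono ENNReal.one_ne_top h
  -- the indicator variables
  set X : Fin m → Ω → ℝ := fun j ω => if v j ω ∈ S then 1 else 0 with hXdef
  have hX_meas : ∀ j, Measurable (X j) := fun j =>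
    Measurable.ite (hv_meas j hS_meas) measurable_const measurable_const
  have hX_indep : iIndepFun X μ := by
    have h := hv_indep.comp
      (fun _ (u : EuclideanSpace ℝ (Fin n)) => if u ∈ S then (1:ℝ) else 0)
      (fun _ => Measurable.ite hS_meas measurable_const measurable_const)
    exact h
  have hfun : ∀ (j : Fin m) (t : ℝ), (fun ω => Real.exp (t * X j ω)) =
      fun ω => (v j ⁻¹' S).indicator (fun _ => Real.exp t - 1) ω + 1 := by
    intro j t
    funext ω
    by_cases hmem : v j ω ∈ S <;>
      simp [hXdef, Set.indicator_apply, Set.mem_preimage, hmem, mul_one, mul_zero,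
        Real.exp_zero]
  have hint_j : ∀ (j : Fin m) (t : ℝ), Integrable (fun ω => Real.exp (t * X j ω)) μ := by
    intro j t
    rw [hfun j t]
    exact ((integrable_const _).indicator (hv_meas j hS_meas)).add (integrable_const 1)
  have hmgf_j : ∀ (j : Fin m) (t : ℝ), mgf (X j) μ t = 1 - p + p * Real.exp t := by
    intro j t
    have hrfl : mgf (X j) μ t = ∫ ω, Real.exp (t * X j ω) ∂μ := rfl
    rw [hrfl, hfun j t,
      integral_add ((integrable_const _).indicator (hv_meas j hS_meas)) (integrable_const 1),
      integral_indicator_const _ (hv_meas j hS_meas), integral_const, measureReal_def, measureReal_def, hident j]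
    simp only [measure_univ, ENNReal.toReal_one, smul_eq_mul, one_mul, ← hpdef]
    ring
  set t0 : ℝ := -γ ^ 2 with ht0
  have ht0le : t0 ≤ 0 := neg_nonpos.mpr (by positivity)
  have hmgf_sum : mgf (∑ j, X j) μ t0 = (1 - p + p * Real.exp t0) ^ m := by
    rw [hX_indep.mgf_sum hX_meas Finset.univ]
    simp_rw [hmgf_j]
    rw [Finset.prod_const, Finset.card_univ, Fintype.card_fin]
  have hint_sum : Integrable (fun ω => Real.exp (t0 * (∑ j, X j) ω)) μ :=
    hX_indep.integrable_exp_mul_sum hX_meas (fun j _ => hint_j j t0)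
  have chern := measure_le_le_exp_mul_mgf (X := ∑ j, X j) (μ := μ)
    (γ ^ 2 / 4 * m) ht0le hint_sum
  have hbase0 : 0 ≤ 1 - p + p * Real.exp t0 := by
    nlinarith [Real.exp_pos t0, hp0, hp1]
  have hfactor : 1 - p + p * Real.exp t0 ≤ Real.exp (-(3 / 8) * γ ^ 4) := by
    refine le_trans (bernoulli_mgf_le hp0 hp1 t0) ?_
    apply Real.exp_le_exp.mpr
    have hmul : t0 * p ≤ t0 * (γ ^ 2 / 2) :=
      mul_le_mul_of_nonpos_left hp_ge ht0le
    rw [ht0] at hmul ⊢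
    nlinarith [hmul]
  have hfin_real : (μ {ω | (∑ j, X j) ω ≤ γ ^ 2 / 4 * m}).toReal ≤
      Real.exp (-(γ ^ 4 * m / 8)) := by
    refine le_trans chern ?_
    rw [hmgf_sum]
    calc Real.exp (-t0 * (γ ^ 2 / 4 * m)) * (1 - p + p * Real.exp t0) ^ m
        ≤ Real.exp (-t0 * (γ ^ 2 / 4 * m)) * (Real.exp (-(3 / 8) * γ ^ 4)) ^ m :=
          mul_le_mul_of_nonneg_left (pow_le_pow_left₀ hbase0 hfactor m) (Real.exp_pos _).le
      _ = Real.exp (-t0 * (γ ^ 2 / 4 * m) + m * (-(3 / 8) * γ ^ 4)) := by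
          rw [← Real.exp_nat_mul, ← Real.exp_add]
      _ ≤ Real.exp (-(γ ^ 4 * m / 8)) := by
          apply Real.exp_le_exp.mpr
          rw [ht0]
          exact le_of_eq (by ring)
  -- rewriting the cardinality as a sum of indicators
  have hcount : ∀ ω : Ω, (({j : Fin m |
      a * ‖x‖ ≤ |∑ i, x i * v j ω i| ∧ a * ‖z‖ ≤ |∑ i, z i * v j ω i| ∧
      |∑ i, w i * v j ω i| ≤ 2 * γ⁻¹ * ‖w‖ ∧
      ‖v j ω‖ ≤ 2 * γ⁻¹ * Real.sqrt n} : Set (Fin m)).ncard : ℝ) = (∑ j, X j) ω := by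
    intro ω
    have heq : {j : Fin m |
        a * ‖x‖ ≤ |∑ i, x i * v j ω i| ∧ a * ‖z‖ ≤ |∑ i, z i * v j ω i| ∧
        |∑ i, w i * v j ω i| ≤ 2 * γ⁻¹ * ‖w‖ ∧
        ‖v j ω‖ ≤ 2 * γ⁻¹ * Real.sqrt n} =
        ↑(Finset.univ.filter fun j => v j ω ∈ S) := by
      ext j
      simp only [Set.mem_setOf_eq, Finset.coe_filter, Finset.mem_univ, true_and, hSdef]
    rw [heq, Set.ncard_coe_finset, Finset.card_filter]
    push_cast
    simp only [Finset.sum_apply]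
    rfl
  have hsets : {ω | (({j : Fin m |
      a * ‖x‖ ≤ |∑ i, x i * v j ω i| ∧ a * ‖z‖ ≤ |∑ i, z i * v j ω i| ∧
      |∑ i, w i * v j ω i| ≤ 2 * γ⁻¹ * ‖w‖ ∧
      ‖v j ω‖ ≤ 2 * γ⁻¹ * Real.sqrt n} : Set (Fin m)).ncard : ℝ) ≤ γ ^ 2 / 4 * m} =
      {ω | (∑ j, X j) ω ≤ γ ^ 2 / 4 * m} := by
    ext ω
    rw [Set.mem_setOf_eq, Set.mem_setOf_eq, hcount ω]
  rw [hsets]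
  calc μ {ω | (∑ j, X j) ω ≤ γ ^ 2 / 4 * m}
      = ENNReal.ofReal ((μ {ω | (∑ j, X j) ω ≤ γ ^ 2 / 4 * m}).toReal) :=
        (ENNReal.ofReal_toReal (measure_ne_top _ _)).symm
    _ ≤ ENNReal.ofReal (Real.exp (-(γ ^ 4 * m / 8))) :=
        ENNReal.ofReal_le_ofReal hfin_real
end
end
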